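/- Let f be a polynomial in n−1 variables symmetric in the first n−2 of them (an 'almost symmetric' polynomial in x_2,...,x_n, symmetric in x_2,...,x_{n−1}). Then for any μ ⊢ n and part j of μ, the Z_1-idempotent Γ^{μ,j} is an eigenvector of f(J_2,...,J_n) with eigenvalue f(c_{j_−(μ)}, c_{μ,j}), where c_{j_−(μ)} is the multiset of contents of the shape j_−(μ) (assigned to x_2,...,x_{n−1} in any order) and c_{μ,j} is the content of the cell added to j_−(μ) to form μ. -/

import Mathlib

/-!
Each Jucys–Murphy element `J_x` acts self-adjointly on `ℂ[S_m]` for the inner product making the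
permutations orthonormal, so it is diagonalizable. By induction on `x`, using
`J_{x+1} = s J_x s + s` for the transposition `s = (x, x+1)`, its eigenvalues are integers in
`[-x, x]`, hence `∏_{|c| ≤ x} (J_x - c) = 0` (Murphy's identity). Murphy's formula writes `e_T` as
a product of Lagrange basis polynomials in the `J_x`, so the identity gives
`J_x e_T = c_T(x) e_T`, and then `f(J_2, …) e_T = f(c_T(2), …) e_T`.

For `T ∈ SYT_{μ,j}` the largest entry sits in the corner cell of content `c_{μ,j}`. Removing that
cell leaves `j_-(μ)`, whose contents are those of the other entries, the smallest one contributing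
`0`. So the values `c_T(2), …` are those of `g` up to a permutation fixing the last variable, and
the almost symmetry of `f` makes the eigenvalue independent of `T`.
-/

open scoped Classical
open Finset

noncomputable section

namespace NC

/-- Conjugation of a group-algebra element by a permutation, extended linearly. -/
def conjA (n : ℕ) (σ : Equiv.Perm (Fin n)) (g : MonoidAlgebra ℂ (Equiv.Perm (Fin n))) :
    MonoidAlgebra ℂ (Equiv.Perm (Fin n)) :=
  MonoidAlgebra.mapDomain (fun π => σ * π * σ⁻¹) g

/-- Cycle type of a permutation, including fixed points as parts equal to 1
(a partition of n, as a multiset). -/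
def fullType {n : ℕ} (π : Equiv.Perm (Fin n)) : Multiset ℕ :=
  π.cycleType + Multiset.replicate (n - π.support.card) 1

/-- The length of the cycle of `π` containing `x`. -/
def cycLenAt {n : ℕ} (π : Equiv.Perm (Fin n)) (x : Fin n) : ℕ :=
  if π x = x then 1 else (π.cycleOf x).support.card

/-- The conjugacy class `C_λ` of permutations of `S_{n+1}` of cycle type `λ`. -/
def Ccl (n : ℕ) (lam : Multiset ℕ) : Finset (Equiv.Perm (Fin (n + 1))) :=
  Finset.univ.filter fun π => fullType π = lam

/-- `C_{λ,i}`: permutations of cycle type `λ` having the largest symbol on a cycle of length `i`. -/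
def Cset (n : ℕ) (lam : Multiset ℕ) (i : ℕ) : Finset (Equiv.Perm (Fin (n + 1))) :=
  (Ccl n lam).filter fun π => cycLenAt π (Fin.last n) = i

/-- The standard basis element `K_{λ,i}` of `Z_1(n+1)`. -/
def Kel (n : ℕ) (lam : Multiset ℕ) (i : ℕ) : MonoidAlgebra ℂ (Equiv.Perm (Fin (n + 1))) :=
  ∑ π ∈ Cset n lam i, MonoidAlgebra.single π 1

/-- Membership in the centralizer `Z_1(n+1)` of the group algebra with respect to the
subgroup of permutations fixing the largest symbol. -/
def Z1mem (n : ℕ) (g : MonoidAlgebra ℂ (Equiv.Perm (Fin (n + 1)))) : Prop :=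
  ∀ σ : Equiv.Perm (Fin (n + 1)), σ (Fin.last n) = Fin.last n → conjA (n + 1) σ g = g

/-- A filling `T : Fin m → Fin m × Fin m` (position of each entry, as (row, column))
is a standard Young tableau: it is injective and every initial segment of entries occupies a
lower set of cells (entries increase along rows and down columns). -/
def IsSYT (m : ℕ) (T : Fin m → Fin m × Fin m) : Prop :=
  Function.Injective T ∧
    ∀ k : Fin m, ∀ c : Fin m × Fin m, c.1 ≤ (T k).1 → c.2 ≤ (T k).2 → ∃ j : Fin m, j ≤ k ∧ T j = c

/-- Length of row `r` of a filling. -/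
def rowLen (m : ℕ) (T : Fin m → Fin m × Fin m) (r : ℕ) : ℕ :=
  (Finset.univ.filter fun k => ((T k).1 : ℕ) = r).card

/-- The shape of a filling, as the multiset of its (positive) row lengths. -/
def shapeOf (m : ℕ) (T : Fin m → Fin m × Fin m) : Multiset ℕ :=
  ((Multiset.range m).map fun r => rowLen m T r).filter (0 < ·)

/-- The set of standard Young tableaux of shape `λ` with `m` cells. -/
def SYTall (m : ℕ) (lam : Multiset ℕ) : Finset (Fin m → Fin m × Fin m) :=
  Finset.univ.filter fun T => IsSYT m T ∧ shapeOf m T = lam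

/-- `d_λ`, the number of standard Young tableaux of shape `λ`. -/
def dnum (m : ℕ) (lam : Multiset ℕ) : ℕ := (SYTall m lam).card

/-- `SYT_{λ,i}`: standard Young tableaux of shape `λ` in which the largest entry lies at the
end of a row of length `i`. -/
def SYTset (n : ℕ) (lam : Multiset ℕ) (i : ℕ) :
    Finset (Fin (n + 1) → Fin (n + 1) × Fin (n + 1)) :=
  (SYTall (n + 1) lam).filter fun T => rowLen (n + 1) T ((T (Fin.last n)).1 : ℕ) = i

/-- The content (column minus row) of the entry `k` in the tableau `T`. -/
def ct (m : ℕ) (T : Fin m → Fin m × Fin m) (k : Fin m) : ℤ :=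
  ((T k).2 : ℤ) - ((T k).1 : ℤ)

/-- The Jucys–Murphy element `J_{x+1} = Σ_{y<x} (y, x)` of `ℂ[S_m]`. -/
def JM (m : ℕ) (x : Fin m) : MonoidAlgebra ℂ (Equiv.Perm (Fin m)) :=
  ∑ y ∈ Finset.univ.filter (fun y : Fin m => y < x), MonoidAlgebra.single (Equiv.swap y x) 1

/-- Young's seminormal unit `e_T`: the Gelfand–Tsetlin idempotent attached to `T`, realized by
Murphy's interpolation formula as a product of spectral projections of the Jucys–Murphy
elements onto the content eigenvalues of `T`. -/
def eTg (m : ℕ) (T : Fin m → Fin m × Fin m) : MonoidAlgebra ℂ (Equiv.Perm (Fin m)) :=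
  ((List.finRange m).map fun (x : Fin m) =>
    (((((Finset.Icc (-((x : ℕ) : ℤ)) ((x : ℕ) : ℤ)).erase (ct m T x)).sort (· ≤ ·)).map fun c =>
      (((ct m T x - c : ℤ) : ℂ))⁻¹ •
        (JM m x - ((c : ℤ) : ℂ) • (1 : MonoidAlgebra ℂ (Equiv.Perm (Fin m))))).prod)).prod

/-- The central element `X^λ = Σ_{T ∈ SYT_λ} e_T` of `ℂ[S_m]` (the central orthogonal
idempotent indexed by `λ`). -/
def Xg (m : ℕ) (lam : Multiset ℕ) : MonoidAlgebra ℂ (Equiv.Perm (Fin m)) :=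
  ∑ T ∈ SYTall m lam, eTg m T

/-- The `Z_1`-idempotent `Γ^{λ,i} = Σ_{T ∈ SYT_{λ,i}} e_T`. -/
def Gam (n : ℕ) (lam : Multiset ℕ) (i : ℕ) : MonoidAlgebra ℂ (Equiv.Perm (Fin (n + 1))) :=
  ∑ T ∈ SYTset n lam i, eTg (n + 1) T

/-- `i_-(λ)`: the partition obtained from `λ` by replacing one part `i` by `i - 1`. -/
def iminus (lam : Multiset ℕ) (i : ℕ) : Multiset ℕ :=
  ((i - 1) ::ₘ lam.erase i).filter (0 < ·)

/-- `c_{λ,i} = i - Σ_{k ≥ i} m_k(λ)`: the content of the cell containing the largest entry in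
any tableau of shape `λ` with that entry at the end of a row of length `i`. -/
def cCorner (lam : Multiset ℕ) (i : ℕ) : ℤ :=
  (i : ℤ) - ((lam.filter fun k => i ≤ k).card : ℤ)

/-- The multiset of contents of the cells of the Ferrers diagram of `λ`. -/
def contentsM (lam : Multiset ℕ) : Multiset ℤ :=
  ↑((((lam.sort (· ≤ ·)).reverse.zipIdx).map fun p =>
      (List.range p.1).map fun c => (c : ℤ) - (p.2 : ℤ)).flatten)

/-- The generalized character `γ^{μ,j}_{λ,i} = (n!/d_μ) [K_{λ,i}] Γ^{μ,j}`, the (normalized)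
coefficient of the standard basis element `K_{λ,i}` in `Γ^{μ,j}` (computed as the average of the
coefficients of `Γ^{μ,j}` over the class `C_{λ,i}`). -/
def gam (n : ℕ) (mu : Multiset ℕ) (j : ℕ) (lam : Multiset ℕ) (i : ℕ) : ℂ :=
  ((Nat.factorial (n + 1) : ℂ) / (dnum (n + 1) mu : ℂ)) *
    ((∑ π ∈ Cset n lam i, (Gam n mu j).coeff π) / ((Cset n lam i).card : ℂ))

/-- The irreducible character `χ^μ` evaluated at `π`: `(n!/d_μ)` times the coefficient of `π`
in the central idempotent `X^μ`. -/
def chi (n : ℕ) (mu : Multiset ℕ) (π : Equiv.Perm (Fin (n + 1))) : ℂ :=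
  ((Nat.factorial (n + 1) : ℂ) / (dnum (n + 1) mu : ℂ)) * (Xg (n + 1) mu).coeff π

/-- The embedding of a permutation of `Fin n` into `S_{n+1}` fixing the last symbol. -/
def extPerm (n : ℕ) (π : Equiv.Perm (Fin n)) : Equiv.Perm (Fin (n + 1)) :=
  π.viaFintypeEmbedding (Fin.castSuccEmb : Fin n ↪ Fin (n + 1))

/-- The induced embedding of group algebras `ℂ[S_n] → ℂ[S_{n+1}]`. -/
def embA (n : ℕ) (g : MonoidAlgebra ℂ (Equiv.Perm (Fin n))) :
    MonoidAlgebra ℂ (Equiv.Perm (Fin (n + 1))) :=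
  MonoidAlgebra.mapDomain (extPerm n) g


/-- Evaluation of a multivariate polynomial at a (commuting) family of elements of a possibly
noncommutative algebra, monomial by monomial. -/
def polyEval {k : ℕ} {A : Type*} [Ring A] [Algebra ℂ A]
    (f : MvPolynomial (Fin k) ℂ) (J : Fin k → A) : A :=
  ∑ d ∈ f.support, MvPolynomial.coeff d f • ((List.finRange k).map fun v => J v ^ d v).prod

open Polynomial

section Eigenvectors

variable {K A : Type*} [Field K] [Ring A] [Algebra K A]

lemma aeval_mul_of_mul_eq_smul {R : Type*} [CommRing R] [Algebra R A] {a w : A} {μ : R}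
    (h : a * w = μ • w) (p : R[X]) : aeval a p * w = p.eval μ • w := by
  have := Module.End.aeval_apply_of_mem_apply_eq_smul (f := Algebra.lmul R A a) (p := p) h
  rwa [Polynomial.aeval_algHom_apply] at this

lemma isRoot_of_aeval_eq_zero [Module.IsTorsionFree K A] {a w : A} {μ : K} {p : K[X]}
    (hp : aeval a p = 0) (h : a * w = μ • w) (hw : w ≠ 0) : p.IsRoot μ := by
  have := aeval_mul_of_mul_eq_smul h p
  rw [hp, zero_mul, eq_comm, smul_eq_zero] at this
  exact this.resolve_right hw

lemma _root_.Commute.aeval_right {R B : Type*} [CommSemiring R] [Semiring B] [Algebra R B]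
    {a b : B} (h : Commute a b) (p : R[X]) : Commute a (aeval b p) := by
  rw [aeval_eq_sum_range]
  exact Commute.sum_right _ _ _ fun i _ => (h.pow_right i).smul_right _

lemma exists_common_eigenvector [IsAlgClosed K] [FiniteDimensional K A] {a b w : A} {μ : K}
    (hab : Commute a b) (hw : w ≠ 0) (haw : a * w = μ • w) :
    ∃ v ≠ 0, a * v = μ • v ∧ ∃ ν : K, b * v = ν • v := by
  set E := Module.End.eigenspace (Algebra.lmul K A a) μ
  have hE : ∀ v ∈ E, Algebra.lmul K A b v ∈ E := fun v hv => by
    rw [Module.End.mem_eigenspace_iff] at hv ⊢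
    simp only [Algebra.coe_lmul_eq_mul, LinearMap.mul_apply'] at hv ⊢
    rw [← mul_assoc, hab.eq, mul_assoc, hv, mul_smul_comm]
  have : Nontrivial E := ⟨⟨⟨w, Module.End.mem_eigenspace_iff.2 haw⟩, 0, by simpa using hw⟩⟩
  obtain ⟨ν, hν⟩ := Module.End.exists_eigenvalue ((Algebra.lmul K A b).restrict hE)
  obtain ⟨⟨v, hvE⟩, hv⟩ := hν.exists_hasEigenvector
  refine ⟨v, by simpa using hv.2, Module.End.mem_eigenspace_iff.1 hvE, ν, ?_⟩
  simpa [Subtype.ext_iff] using Module.End.mem_eigenspace_iff.1 hv.1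

lemma exists_eigenvector_of_involution {J s w : A} {μ c : K} (hs : s * s = 1) (hw : w ≠ 0)
    (hJw : J * w = c • w) (hJsw : J * (s * w) = μ • (s * w) - w) (hμc : μ ≠ c)
    (hμc' : (μ - c) ^ 2 ≠ 1) : ∃ v ≠ 0, J * v = μ • v := by
  have hd : μ - c ≠ 0 := sub_ne_zero.2 hμc
  refine ⟨s * w - (μ - c)⁻¹ • w, fun h => hμc' ?_, ?_⟩
  · have hsw : s * w = (μ - c)⁻¹ • w := sub_eq_zero.1 h
    have hw2 : w = ((μ - c)⁻¹ ^ 2) • w := by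
      conv_lhs => rw [← one_mul w, ← hs, mul_assoc, hsw, mul_smul_comm, hsw, smul_smul, ← sq]
    have hsq : ((μ - c)⁻¹ ^ 2 - 1) • w = 0 := by rw [sub_smul, one_smul, ← hw2, sub_self]
    have := (smul_eq_zero.1 hsq).resolve_right hw
    rwa [inv_pow, sub_eq_zero, inv_eq_one] at this
  · rw [mul_sub, hJsw, mul_smul_comm, hJw, smul_sub, smul_smul, smul_smul, sub_sub, sub_right_inj,
      ← one_smul K w, smul_smul, smul_smul, ← add_smul]
    congr 1
    field_simp
    ring

lemma mul_aeval_lagrangeBasis {ι : Type*} [DecidableEq ι] {a : A} {s : Finset ι} {v : ι → K}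
    {i : ι} (hi : i ∈ s) (ha : aeval a (Lagrange.nodal s v) = 0) :
    a * aeval a (Lagrange.basis s v i) = v i • aeval a (Lagrange.basis s v i) := by
  have hpoly : (X - C (v i)) * Lagrange.basis s v i =
      C (Lagrange.nodalWeight s v i) * Lagrange.nodal s v := by
    rw [Lagrange.basis_eq_prod_sub_inv_mul_nodal_div hi, ← Lagrange.nodal_erase_eq_nodal_div hi,
      Lagrange.nodal_eq_mul_nodal_erase hi]
    ring
  have := congrArg (aeval a) hpoly
  rwa [map_mul, map_mul, ha, mul_zero, map_sub, aeval_X, aeval_C, sub_mul,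
    Algebra.algebraMap_eq_smul_one, smul_mul_assoc, one_mul, sub_eq_zero] at this

end Eigenvectors

lemma aeval_eq_zero_of_isSymmetric {𝕜 E : Type*} [RCLike 𝕜] [NormedAddCommGroup E]
    [InnerProductSpace 𝕜 E] [FiniteDimensional 𝕜 E] {T : E →ₗ[𝕜] E} (hT : T.IsSymmetric)
    (p : 𝕜[X]) (hp : ∀ μ, Module.End.HasEigenvalue T μ → p.IsRoot μ) : aeval T p = 0 := by
  refine (hT.eigenvectorBasis rfl).toBasis.ext fun i => ?_
  rw [OrthonormalBasis.coe_toBasis, Module.End.aeval_apply_of_hasEigenvector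
    (hT.hasEigenvector_eigenvectorBasis rfl i), (hp _ (hT.hasEigenvalue_eigenvalues rfl i)).eq_zero,
    zero_smul, LinearMap.zero_apply]

lemma polyEval_mul_of_mul_eq_smul {k : ℕ} {A : Type*} [Ring A] [Algebra ℂ A]
    (f : MvPolynomial (Fin k) ℂ) {J : Fin k → A} {μ : Fin k → ℂ} {w : A}
    (h : ∀ v, J v * w = μ v • w) : polyEval f J * w = MvPolynomial.eval μ f • w := by
  have hmono : ∀ (d : Fin k → ℕ) (l : List (Fin k)),
      (l.map fun v => J v ^ d v).prod * w = (l.map fun v => μ v ^ d v).prod • w := by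
    intro d l
    induction l with
    | nil => simp
    | cons v l ih =>
      have hpow := aeval_mul_of_mul_eq_smul (h v) (X ^ d v)
      rw [map_pow, aeval_X, eval_pow, eval_X] at hpow
      rw [List.map_cons, List.prod_cons, List.map_cons, List.prod_cons, mul_assoc, ih,
        mul_smul_comm, hpow, smul_smul, mul_comm]
  rw [polyEval, Finset.sum_mul, MvPolynomial.eval_eq', Finset.sum_smul]
  refine Finset.sum_congr rfl fun d _ => ?_
  rw [smul_mul_assoc, hmono, smul_smul, Fin.prod_univ_def]

section GroupAlgebraInner

variable {G : Type*} [Fintype G]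

/-- `ℂ[G]` with the inner product for which the group elements are orthonormal. -/
def toL2 : MonoidAlgebra ℂ G ≃ₗ[ℂ] EuclideanSpace ℂ G :=
  (MonoidAlgebra.coeffLinearEquiv ℂ).trans
    ((Finsupp.linearEquivFunOnFinite ℂ ℂ G).trans (WithLp.linearEquiv 2 ℂ (G → ℂ)).symm)

@[simp] lemma toL2_apply (a : MonoidAlgebra ℂ G) (g : G) : toL2 a g = a.coeff g := rfl

lemma inner_toL2_single_mul [Group G] (g : G) (a b : MonoidAlgebra ℂ G) :
    inner ℂ (toL2 (MonoidAlgebra.single g 1 * a)) (toL2 b) =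
      inner ℂ (toL2 a) (toL2 (MonoidAlgebra.single g⁻¹ 1 * b)) := by
  simp only [PiLp.inner_apply, toL2_apply, MonoidAlgebra.coeff_single_mul_apply]
  exact Fintype.sum_equiv (Equiv.mulLeft g⁻¹) _ _ fun h => by simp

end GroupAlgebraInner

section JucysMurphy

variable {m : ℕ}

lemma JM_commute_single {x : Fin m} {σ : Equiv.Perm (Fin m)} (hσx : σ x = x)
    (hσ : ∀ y, σ y < x ↔ y < x) : Commute (JM m x) (MonoidAlgebra.single σ 1) := by
  simp only [JM, Commute, SemiconjBy, Finset.sum_mul, Finset.mul_sum,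
    MonoidAlgebra.single_mul_single, one_mul]
  refine (Finset.sum_nbij' σ σ.symm (by simp [hσ]) (fun y => by simpa using (hσ (σ.symm y)).1)
    (by simp) (by simp) fun y _ => ?_).symm
  have hconj := Equiv.swap_apply_apply σ y x
  rw [hσx] at hconj
  rw [hconj]
  group

lemma JM_commute (x y : Fin m) : Commute (JM m x) (JM m y) := by
  wlog hxy : y < x generalizing x y
  · rcases (not_lt.1 hxy).lt_or_eq with h | rfl
    · exact (this y x h).symm
    · exact Commute.refl _
  refine Commute.sum_right _ _ _ fun z hz => JM_commute_single ?_ fun w => ?_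
  · have hz : z < y := by simpa using hz
    exact Equiv.swap_apply_of_ne_of_ne (hz.trans hxy).ne' hxy.ne'
  · have hz : z < y := by simpa using hz
    rcases eq_or_ne w z with rfl | hwz
    · simp [hxy, hz.trans hxy]
    rcases eq_or_ne w y with rfl | hwy
    · simp [hxy, hz.trans hxy]
    · rw [Equiv.swap_apply_of_ne_of_ne hwz hwy]

lemma JM_eq_swap_conj_add_swap {x' x : Fin m} (hx : (x : ℕ) = x' + 1) :
    JM m x = MonoidAlgebra.single (Equiv.swap x' x) 1 * JM m x' *
        MonoidAlgebra.single (Equiv.swap x' x) 1 + MonoidAlgebra.single (Equiv.swap x' x) 1 := by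
  have hlt : (Finset.univ.filter fun y : Fin m => y < x) =
      insert x' (Finset.univ.filter fun y : Fin m => y < x') := by
    ext y
    simp only [Finset.mem_filter, Finset.mem_univ, true_and, Finset.mem_insert, Fin.lt_def, hx,
      Fin.ext_iff]
    omega
  rw [JM, hlt, Finset.sum_insert (by simp), add_comm, JM, Finset.mul_sum, Finset.sum_mul]
  congr 1
  refine Finset.sum_congr rfl fun y hy => ?_
  have hy : y < x' := by simpa using hy
  have hyx : y ≠ x := by rintro rfl; simp [Fin.lt_def, hx] at hy
  rw [MonoidAlgebra.single_mul_single, MonoidAlgebra.single_mul_single, one_mul, mul_one]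
  have hconj := Equiv.swap_apply_apply (Equiv.swap x' x) y x'
  rw [Equiv.swap_apply_of_ne_of_ne hy.ne hyx, Equiv.swap_apply_left, Equiv.swap_inv] at hconj
  rw [hconj]

lemma isSymmetric_JM (x : Fin m) :
    (toL2.conjAlgEquiv ℂ (Algebra.lmul ℂ _ (JM m x))).IsSymmetric := by
  intro u v
  obtain ⟨a, rfl⟩ := toL2.surjective u
  obtain ⟨b, rfl⟩ := toL2.surjective v
  have hT : ∀ c, toL2.conjAlgEquiv ℂ (Algebra.lmul ℂ _ (JM m x)) (toL2 c) = toL2 (JM m x * c) :=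
    fun c => by simp [LinearEquiv.conjAlgEquiv_apply]
  rw [hT, hT]
  simp only [JM, Finset.sum_mul, map_sum, sum_inner, inner_sum]
  refine Finset.sum_congr rfl fun y _ => ?_
  simpa using inner_toL2_single_mul (Equiv.swap y x) a b

lemma aeval_JM_eq_zero_of_isRoot (x : Fin m) (p : ℂ[X])
    (hp : ∀ (μ : ℂ) (w : MonoidAlgebra ℂ (Equiv.Perm (Fin m))), w ≠ 0 → JM m x * w = μ • w →
      p.IsRoot μ) :
    aeval (JM m x) p = 0 := by
  have hT : aeval (toL2.conjAlgEquiv ℂ (Algebra.lmul ℂ _ (JM m x))) p =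
      toL2.conjAlgEquiv ℂ (Algebra.lmul ℂ _ (aeval (JM m x) p)) := by
    rw [Polynomial.aeval_algHom_apply, Polynomial.aeval_algHom_apply]
  have hzero := aeval_eq_zero_of_isSymmetric (isSymmetric_JM x) p fun μ hμ => by
    obtain ⟨v, hv⟩ := hμ.exists_hasEigenvector
    refine hp μ (toL2.symm v) (by simpa using hv.2) ?_
    simpa using congrArg toL2.symm (Module.End.mem_eigenspace_iff.1 hv.1)
  rw [hT] at hzero
  simpa using congrArg (fun L => toL2.symm (L (toL2 1))) hzero

/-- Vanishes exactly at the possible contents `-k, …, k` of the cell holding the entry `k`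
(entries counted from `0`). -/
def contentPoly (k : ℕ) : ℂ[X] := Lagrange.nodal (Finset.Icc (-(k : ℤ)) k) ((↑) : ℤ → ℂ)

lemma isRoot_contentPoly_iff {k : ℕ} {μ : ℂ} :
    (contentPoly k).IsRoot μ ↔ ∃ c ∈ Finset.Icc (-(k : ℤ)) k, μ = c := by
  simp [contentPoly, Lagrange.eval_nodal, Finset.prod_eq_zero_iff, sub_eq_zero]

lemma isRoot_contentPoly_of_JM_succ {x' x : Fin m} (hx : (x : ℕ) = x' + 1)
    (ih : aeval (JM m x') (contentPoly x') = 0) {μ : ℂ} {v : MonoidAlgebra ℂ (Equiv.Perm (Fin m))}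
    (hv : v ≠ 0) (hJv : JM m x * v = μ • v) : (contentPoly x).IsRoot μ := by
  set s : MonoidAlgebra ℂ (Equiv.Perm (Fin m)) := MonoidAlgebra.single (Equiv.swap x' x) 1
  have hs : s * s = 1 := by simp [s, MonoidAlgebra.one_def]
  have hs' : ∀ y, s * (s * y) = y := fun y => by rw [← mul_assoc, hs, one_mul]
  obtain ⟨w, hw, hJw, a, hJ'w⟩ := exists_common_eigenvector (JM_commute x x') hv hJv
  obtain ⟨c, hc, rfl⟩ := isRoot_contentPoly_iff.1 (isRoot_of_aeval_eq_zero ih hJ'w hw)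
  have hJ'sw : JM m x' * (s * w) = μ • (s * w) - w := by
    have hconj : JM m x' = s * JM m x * s - s := by
      rw [JM_eq_swap_conj_add_swap hx]
      change JM m x' = s * (s * JM m x' * s + s) * s - s
      simp only [mul_add, add_mul, mul_assoc, hs, hs', mul_one, one_mul, add_sub_cancel_right]
    rw [hconj, sub_mul, mul_assoc, mul_assoc, hs', hJw, mul_smul_comm]
  rw [isRoot_contentPoly_iff]
  rw [Finset.mem_Icc] at hc
  by_cases hμc : μ = c
  -- Then `(J' - c) (s w) = -w ≠ 0` but `(J' - c)² (s w) = 0`, while `c` is a simple root of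
  -- `contentPoly x'`, which annihilates `J'`.
  · exfalso
    rw [contentPoly, Lagrange.nodal_eq_mul_nodal_erase (Finset.mem_Icc.2 hc), mul_comm,
      map_mul] at ih
    have hX : aeval (JM m x') (X - C (c : ℂ)) * (s * w) = -w := by
      rw [map_sub, aeval_X, aeval_C, sub_mul, hJ'sw, Algebra.algebraMap_eq_smul_one,
        smul_mul_assoc, one_mul, hμc, sub_sub_cancel_left]
    have := congrArg (· * (s * w)) ih
    simp only [mul_assoc, hX, zero_mul, mul_neg, neg_eq_zero, aeval_mul_of_mul_eq_smul hJ'w,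
      smul_eq_zero] at this
    refine this.elim (Lagrange.eval_nodal_not_at_node fun d hd => ?_) hw
    simp only [Finset.mem_erase] at hd
    exact_mod_cast hd.1.symm
  by_cases hμc' : (μ - c) ^ 2 = 1
  · rcases sq_eq_one_iff.1 hμc' with h | h
    · exact ⟨c + 1, Finset.mem_Icc.2 (by omega), by push_cast; linear_combination h⟩
    · exact ⟨c - 1, Finset.mem_Icc.2 (by omega), by push_cast; linear_combination h⟩
  obtain ⟨w', hw', hJ'w'⟩ := exists_eigenvector_of_involution hs hw hJ'w hJ'sw hμc hμc'
  obtain ⟨d, hd, rfl⟩ := isRoot_contentPoly_iff.1 (isRoot_of_aeval_eq_zero ih hJ'w' hw')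
  rw [Finset.mem_Icc] at hd
  exact ⟨d, Finset.mem_Icc.2 (by omega), rfl⟩

theorem aeval_JM_contentPoly (x : Fin m) : aeval (JM m x) (contentPoly x) = 0 := by
  induction hk : (x : ℕ) generalizing x with
  | zero =>
    have hJ : JM m x = 0 := Finset.sum_eq_zero fun y hy => by
      simp [Fin.lt_def, hk] at hy
    simp [hJ, contentPoly, Lagrange.nodal]
  | succ k ih =>
    refine aeval_JM_eq_zero_of_isRoot x _ fun μ v hv hJv => ?_
    rw [← hk]
    exact isRoot_contentPoly_of_JM_succ (x' := ⟨k, by omega⟩) hk (ih _ rfl) hv hJv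

end JucysMurphy

namespace IsSYT

variable {m : ℕ} {T : Fin m → Fin m × Fin m}

lemma exists_lt_of_le_of_ne (hT : IsSYT m T) {x : Fin m} {c : Fin m × Fin m}
    (h1 : c.1 ≤ (T x).1) (h2 : c.2 ≤ (T x).2) (hne : c ≠ T x) : ∃ k < x, T k = c := by
  obtain ⟨k, hkx, rfl⟩ := hT.2 x c h1 h2
  exact ⟨k, hkx.lt_of_ne (by rintro rfl; exact hne rfl), rfl⟩

lemma row_add_col_le (hT : IsSYT m T) (x : Fin m) : ((T x).1 : ℕ) + (T x).2 ≤ x := by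
  induction hx : (x : ℕ) using Nat.strong_induction_on generalizing x with
  | _ k ih =>
    -- the left or upper neighbour of the cell of `x` holds a smaller entry
    have step : ∀ c : Fin m × Fin m, c.1 ≤ (T x).1 → c.2 ≤ (T x).2 → c ≠ T x →
        (c.1 : ℕ) + c.2 < k := fun c h1 h2 hne => by
      obtain ⟨k', hk', rfl⟩ := hT.exists_lt_of_le_of_ne h1 h2 hne
      have := ih k' (hx ▸ hk') k' rfl
      omega
    rcases hTx : T x with ⟨⟨r, hr⟩, ⟨c, hc⟩⟩
    simp only [hTx] at step ⊢
    rcases Nat.eq_zero_or_pos r with rfl | hr0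
    · rcases Nat.eq_zero_or_pos c with rfl | hc0
      · omega
      · have := step (⟨0, hr⟩, ⟨c - 1, by omega⟩) le_rfl (Fin.mk_le_mk.2 (by omega))
          (by simp [Prod.ext_iff]; omega)
        simp at this
        omega
    · have := step (⟨r - 1, by omega⟩, ⟨c, hc⟩) (Fin.mk_le_mk.2 (by omega)) le_rfl
        (by simp [Prod.ext_iff]; omega)
      simp at this
      omega

lemma ct_mem_Icc (hT : IsSYT m T) (x : Fin m) : ct m T x ∈ Finset.Icc (-(x : ℤ)) x := by
  have := hT.row_add_col_le x
  rw [ct, Finset.mem_Icc]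
  omega

end IsSYT

section SeminormalUnit

variable {m : ℕ}

lemma eTg_eq_prod_aeval (T : Fin m → Fin m × Fin m) :
    eTg m T = ((List.finRange m).map fun x =>
      aeval (JM m x) (Lagrange.basis (Finset.Icc (-(x : ℤ)) x) ((↑) : ℤ → ℂ) (ct m T x))).prod := by
  unfold eTg
  congr 1
  refine List.map_congr_left fun x _ => ?_
  rw [Lagrange.basis, Finset.prod_eq_multiset_prod, ← Finset.sort_eq _ (· ≤ ·), Multiset.map_coe,
    Multiset.prod_coe, map_list_prod, List.map_map]
  congr 1
  refine List.map_congr_left fun c _ => ?_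
  rw [Function.comp_apply, Lagrange.basisDivisor, map_mul, aeval_C, map_sub, aeval_X, aeval_C,
    ← Algebra.smul_def, Algebra.algebraMap_eq_smul_one, Int.cast_sub]

theorem JM_mul_eTg {T : Fin m → Fin m × Fin m} (hT : IsSYT m T) (x : Fin m) :
    JM m x * eTg m T = (ct m T x : ℂ) • eTg m T := by
  obtain ⟨l₁, l₂, hl⟩ := List.append_of_mem (List.mem_finRange x)
  have hcomm : Commute (JM m x) ((l₁.map fun y =>
      aeval (JM m y) (Lagrange.basis (Finset.Icc (-(y : ℤ)) y) ((↑) : ℤ → ℂ) (ct m T y))).prod) :=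
    Commute.list_prod_right _ _ fun a ha => by
      obtain ⟨y, -, rfl⟩ := List.mem_map.1 ha
      exact (JM_commute x y).aeval_right _
  rw [eTg_eq_prod_aeval, hl, List.map_append, List.map_cons, List.prod_append, List.prod_cons,
    hcomm.left_comm, ← mul_assoc (JM m x),
    mul_aeval_lagrangeBasis (hT.ct_mem_Icc x) (aeval_JM_contentPoly x), smul_mul_assoc,
    mul_smul_comm]

end SeminormalUnit

section Contents

def rowContents (len r : ℕ) : Multiset ℤ := (Multiset.range len).map fun c : ℕ => (c : ℤ) - r

lemma rowContents_succ (len r : ℕ) :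
    rowContents (len + 1) r = ((len : ℤ) - r) ::ₘ rowContents len r := by
  simp [rowContents, Multiset.range_succ]

-- A decreasing list has its zeros at the end, so dropping them does not shift the row indices.
lemma flatten_zipIdx_filter_pos {F : ℕ × ℕ → List ℤ} (hF : ∀ i, F (0, i) = []) {l : List ℕ}
    (hl : l.Pairwise (· ≥ ·)) (r : ℕ) :
    (((l.filter (0 < ·)).zipIdx r).map F).flatten = ((l.zipIdx r).map F).flatten := by
  induction l generalizing r with
  | nil => rfl
  | cons a t ih =>
    rw [List.pairwise_cons] at hl
    rcases Nat.eq_zero_or_pos a with rfl | ha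
    · have ht : ∀ b ∈ t, b = 0 := fun b hb => Nat.le_zero.1 (hl.1 b hb)
      rw [List.filter_eq_nil_iff.2 (by simpa using ht)]
      refine (List.flatten_eq_nil_iff.2 fun l hl' => ?_).symm
      obtain ⟨⟨b, i⟩, hbi, rfl⟩ := List.mem_map.1 hl'
      rcases List.mem_cons.1 (List.fst_mem_of_mem_zipIdx hbi) with hb | hb
      · simp only at hb
        rw [hb, hF]
      · rw [ht b hb, hF]
    · rw [List.filter_cons_of_pos (by simpa using ha), List.zipIdx_cons, List.zipIdx_cons,
        List.map_cons, List.map_cons, List.flatten_cons, List.flatten_cons, ih hl.2]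

lemma coe_flatten_zipIdx_map_range (ℓ : ℕ → ℕ) (R : ℕ) :
    (↑((((List.range R).map ℓ).zipIdx).map fun p =>
      (List.range p.1).map fun c => (c : ℤ) - p.2).flatten : Multiset ℤ) =
      ∑ r ∈ Finset.range R, rowContents (ℓ r) r := by
  induction R with
  | zero => rfl
  | succ R ih =>
    rw [List.range_succ, List.map_append, List.zipIdx_append, List.map_append,
      List.flatten_append, ← Multiset.coe_add, ih, Finset.sum_range_succ]
    simp only [List.length_map, List.length_range, zero_add, List.zipIdx_cons, List.zipIdx_nil,
      List.map_cons, List.map_nil, List.flatten_cons, List.flatten_nil, List.append_nil,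
      rowContents, List.bind_eq_flatMap, List.pure_def]
    rw [← List.map_eq_flatMap, List.map_map]
    rfl

lemma contentsM_filter_pos_map_range {ℓ : ℕ → ℕ} (hℓ : Antitone ℓ) (R : ℕ) :
    contentsM (((Multiset.range R).map ℓ).filter (0 < ·)) =
      ∑ r ∈ Finset.range R, rowContents (ℓ r) r := by
  have hsorted : ((List.range R).map ℓ).Pairwise (· ≥ ·) :=
    List.pairwise_map.2 (List.pairwise_lt_range.imp fun h => hℓ h.le)
  have hsort : ((((Multiset.range R).map ℓ).filter (0 < ·)).sort (· ≤ ·)).reverse =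
      ((List.range R).map ℓ).filter (0 < ·) := by
    refine List.Perm.eq_of_pairwise (le := (· ≥ ·)) (fun a b _ _ h1 h2 => le_antisymm h2 h1)
      (List.pairwise_reverse.2 (Multiset.pairwise_sort _ _)) (hsorted.filter _) ?_
    rw [← Multiset.coe_eq_coe, Multiset.coe_reverse, Multiset.sort_eq]
    rfl
  rw [contentsM, hsort, flatten_zipIdx_filter_pos (by simp) hsorted, coe_flatten_zipIdx_map_range]

lemma iminus_filter_pos_map_range {ℓ : ℕ → ℕ} {R r : ℕ} (hr : r < R) (hℓr : 0 < ℓ r) :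
    iminus (((Multiset.range R).map ℓ).filter (0 < ·)) (ℓ r) =
      ((Multiset.range R).map (Function.update ℓ r (ℓ r - 1))).filter (0 < ·) := by
  have hsplit : ∀ f : ℕ → ℕ,
      (Multiset.range R).map f = f r ::ₘ ((Multiset.range R).erase r).map f :=
    fun f => by rw [← Multiset.map_cons, Multiset.cons_erase (Multiset.mem_range.2 hr)]
  have hrest : ((Multiset.range R).erase r).map (Function.update ℓ r (ℓ r - 1)) =
      ((Multiset.range R).erase r).map ℓ := Multiset.map_congr rfl fun a ha =>
    Function.update_of_ne ((Multiset.nodup_range R).mem_erase_iff.1 ha).1 _ _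
  rw [iminus, hsplit, hsplit, hrest, Function.update_self, Multiset.filter_cons_of_pos _ hℓr,
    Multiset.erase_cons_head, Multiset.filter_cons, Multiset.filter_cons, Multiset.filter_filter]
  simp

end Contents

lemma eq_range_card_of_forall_le_mem {s : Finset ℕ} (hs : ∀ a b, a ≤ b → b ∈ s → a ∈ s) :
    s = Finset.range s.card := by
  refine Finset.eq_of_subset_of_card_le (fun a ha => Finset.mem_range.2 ?_) (by simp)
  by_contra! hcard
  have := Finset.card_le_card fun i (hi : i ∈ Finset.range (a + 1)) =>
    hs i a (Nat.lt_succ_iff.1 (Finset.mem_range.1 hi)) ha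
  simp at this
  omega

namespace IsSYT

section Rows

variable {m : ℕ} {T : Fin m → Fin m × Fin m}

lemma injOn_col_filter_row (hT : IsSYT m T) (r : ℕ) :
    Set.InjOn (fun k => ((T k).2 : ℕ)) (Finset.univ.filter fun k => ((T k).1 : ℕ) = r) :=
  fun a ha b hb hab => hT.1 (Prod.ext (Fin.ext (by simp_all)) (Fin.ext hab))

lemma image_col_filter_row (hT : IsSYT m T) (r : ℕ) :
    (Finset.univ.filter fun k => ((T k).1 : ℕ) = r).image (fun k => ((T k).2 : ℕ)) =
      Finset.range (rowLen m T r) := by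
  rw [rowLen, ← Finset.card_image_of_injOn (hT.injOn_col_filter_row r)]
  refine eq_range_card_of_forall_le_mem fun a b hab hb => ?_
  obtain ⟨k, hk, rfl⟩ := Finset.mem_image.1 hb
  obtain ⟨k', -, hk'⟩ := hT.2 k ((T k).1, ⟨a, hab.trans_lt (T k).2.isLt⟩) le_rfl
    (Fin.mk_le_mk.2 hab)
  exact Finset.mem_image.2 ⟨k', by simpa [hk'] using hk, by simp [hk']⟩

lemma lt_rowLen_iff (hT : IsSYT m T) {r c : ℕ} :
    c < rowLen m T r ↔ ∃ k, ((T k).1 : ℕ) = r ∧ ((T k).2 : ℕ) = c := by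
  rw [← Finset.mem_range, ← hT.image_col_filter_row]
  simp

lemma rowLen_antitone (hT : IsSYT m T) : Antitone (rowLen m T) := by
  intro r' r hr
  by_contra! hlt
  obtain ⟨k, hkr, hkc⟩ := hT.lt_rowLen_iff.1 (Nat.sub_one_lt_of_lt hlt)
  obtain ⟨k', -, hk'⟩ := hT.2 k (⟨r', hr.trans_lt (hkr ▸ (T k).1.isLt)⟩, (T k).2)
    (Fin.mk_le_mk.2 (hkr ▸ hr)) le_rfl
  have := (hT.lt_rowLen_iff (r := r') (c := rowLen m T r - 1)).2
    ⟨k', by simp [hk'], by simp [hk', hkc]⟩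
  omega

lemma map_ct_filter_row (hT : IsSYT m T) (r : ℕ) :
    (Finset.univ.filter fun k => ((T k).1 : ℕ) = r).val.map (ct m T) =
      rowContents (rowLen m T r) r := by
  calc _ = ((Finset.univ.filter fun k => ((T k).1 : ℕ) = r).val.map fun k => ((T k).2 : ℕ)).map
        fun c : ℕ => (c : ℤ) - r := by
        rw [Multiset.map_map]
        refine Multiset.map_congr rfl fun k hk => ?_
        simp [ct, (Finset.mem_filter.1 (Finset.mem_def.2 hk)).2]
    _ = _ := by
      rw [← Finset.image_val_of_injOn (hT.injOn_col_filter_row r), hT.image_col_filter_row]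
      rfl

lemma map_ct_univ (hT : IsSYT m T) :
    Finset.univ.val.map (ct m T) = ∑ r ∈ Finset.range m, rowContents (rowLen m T r) r := by
  have hsum : ∀ s : Finset (Fin m), s.val.map (ct m T) = ∑ k ∈ s, {ct m T k} := fun s => by
    rw [Finset.sum_eq_multiset_sum, ← Multiset.sum_map_singleton (s.val.map (ct m T)),
      Multiset.map_map]
    rfl
  rw [hsum, ← Finset.sum_fiberwise_of_maps_to (g := fun k => ((T k).1 : ℕ))
    (t := Finset.range m) fun k _ => Finset.mem_range.2 (T k).1.isLt]
  exact Finset.sum_congr rfl fun r _ => by rw [← hsum, hT.map_ct_filter_row]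

theorem map_ct_univ_eq_contentsM (hT : IsSYT m T) :
    Finset.univ.val.map (ct m T) = contentsM (shapeOf m T) := by
  rw [shapeOf, contentsM_filter_pos_map_range hT.rowLen_antitone, hT.map_ct_univ]

end Rows

section LastEntry

variable {n : ℕ} {T : Fin (n + 1) → Fin (n + 1) × Fin (n + 1)}

lemma eq_last_of_le (hT : IsSYT (n + 1) T) {k : Fin (n + 1)}
    (h1 : (T (Fin.last n)).1 ≤ (T k).1) (h2 : (T (Fin.last n)).2 ≤ (T k).2) : k = Fin.last n := by
  obtain ⟨k', hk', he⟩ := hT.2 k _ h1 h2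
  exact le_antisymm (Fin.le_last k) (hT.1 he ▸ hk')

lemma col_last_add_one (hT : IsSYT (n + 1) T) :
    ((T (Fin.last n)).2 : ℕ) + 1 = rowLen (n + 1) T (T (Fin.last n)).1 := by
  refine le_antisymm (hT.lt_rowLen_iff.2 ⟨_, rfl, rfl⟩) (not_lt.1 fun hlt => ?_)
  obtain ⟨k, hkr, hkc⟩ := hT.lt_rowLen_iff.1 hlt
  have := hT.eq_last_of_le (k := k) (Fin.le_def.2 hkr.ge) (Fin.le_def.2 (by omega))
  subst this
  omega

lemma rowLen_succ_row_last_le (hT : IsSYT (n + 1) T) :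
    rowLen (n + 1) T ((T (Fin.last n)).1 + 1) ≤ (T (Fin.last n)).2 := by
  by_contra! hlt
  obtain ⟨k, hkr, hkc⟩ := hT.lt_rowLen_iff.1 hlt
  have := hT.eq_last_of_le (k := k) (Fin.le_def.2 (by omega)) (Fin.le_def.2 hkc.ge)
  subst this
  omega

lemma le_rowLen_iff_le_row_last (hT : IsSYT (n + 1) T) {r : ℕ} :
    rowLen (n + 1) T (T (Fin.last n)).1 ≤ rowLen (n + 1) T r ↔ r ≤ (T (Fin.last n)).1 := by
  refine ⟨fun h => not_lt.1 fun hlt => ?_, fun h => hT.rowLen_antitone h⟩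
  have := hT.rowLen_antitone (show (T (Fin.last n)).1 + 1 ≤ r by omega)
  have := hT.col_last_add_one
  have := hT.rowLen_succ_row_last_le
  omega

lemma ct_last_eq_cCorner (hT : IsSYT (n + 1) T) :
    ct (n + 1) T (Fin.last n) =
      cCorner (shapeOf (n + 1) T) (rowLen (n + 1) T (T (Fin.last n)).1) := by
  have hcol := hT.col_last_add_one
  have hcard : Multiset.card ((shapeOf (n + 1) T).filter
      (rowLen (n + 1) T (T (Fin.last n)).1 ≤ ·)) = (T (Fin.last n)).1 + 1 := by
    rw [shapeOf, Multiset.filter_filter, Multiset.filter_congr fun a _ =>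
      and_iff_left_of_imp fun (h : _ ≤ a) => (show 0 < _ by omega).trans_le h,
      Multiset.filter_map, Multiset.card_map]
    have hfilter : (Finset.range (n + 1)).filter
        (fun r => rowLen (n + 1) T (T (Fin.last n)).1 ≤ rowLen (n + 1) T r) =
        Finset.range ((T (Fin.last n)).1 + 1) := by
      ext r
      simp only [Finset.mem_filter, Finset.mem_range, hT.le_rowLen_iff_le_row_last]
      omega
    rw [← Finset.card_range ((T (Fin.last n)).1 + 1), ← hfilter]
    rfl
  rw [ct, cCorner, hcard]
  push_cast
  omega

lemma antitone_update_rowLen_row_last (hT : IsSYT (n + 1) T) :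
    Antitone (Function.update (rowLen (n + 1) T) (T (Fin.last n)).1
      (rowLen (n + 1) T (T (Fin.last n)).1 - 1)) := by
  intro a b hab
  have := hT.rowLen_antitone hab
  have := hT.col_last_add_one
  have := hT.rowLen_succ_row_last_le
  rcases eq_or_ne b (T (Fin.last n)).1 with rfl | hb <;>
    rcases eq_or_ne a (T (Fin.last n)).1 with rfl | ha
  · simp
  · simp only [Function.update_self, Function.update_of_ne ha]
    omega
  · have := hT.rowLen_antitone (show (T (Fin.last n)).1 + 1 ≤ b by omega)
    simp only [Function.update_self, Function.update_of_ne hb]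
    omega
  · simpa [Function.update_of_ne ha, Function.update_of_ne hb]

theorem contentsM_shapeOf_eq_cons (hT : IsSYT (n + 1) T) :
    contentsM (shapeOf (n + 1) T) = ct (n + 1) T (Fin.last n) ::ₘ
      contentsM (iminus (shapeOf (n + 1) T) (rowLen (n + 1) T (T (Fin.last n)).1)) := by
  have hcol := hT.col_last_add_one
  have hr : ((T (Fin.last n)).1 : ℕ) ∈ Finset.range (n + 1) :=
    Finset.mem_range.2 (T (Fin.last n)).1.isLt
  rw [shapeOf, iminus_filter_pos_map_range (Finset.mem_range.1 hr) (by omega),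
    contentsM_filter_pos_map_range hT.rowLen_antitone,
    contentsM_filter_pos_map_range hT.antitone_update_rowLen_row_last,
    ← Finset.add_sum_erase _ _ hr, ← Finset.add_sum_erase _ _ hr, Function.update_self,
    ← Multiset.cons_add]
  congr 1
  · rw [← hcol, rowContents_succ, ct, Nat.add_sub_cancel]
  · exact Finset.sum_congr rfl fun a ha => by rw [Function.update_of_ne (Finset.ne_of_mem_erase ha)]

end LastEntry

theorem map_ct_succ_castSucc {n : ℕ} {T : Fin (n + 2) → Fin (n + 2) × Fin (n + 2)}
    (hT : IsSYT (n + 2) T) :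
    Finset.univ.val.map (fun v : Fin n => ct (n + 2) T v.castSucc.succ) =
      (contentsM (iminus (shapeOf (n + 2) T)
        (rowLen (n + 2) T (T (Fin.last (n + 1))).1))).erase 0 := by
  have h := hT.map_ct_univ_eq_contentsM
  have hct0 : ct (n + 2) T 0 = 0 := by
    have := hT.row_add_col_le 0
    simp only [Fin.val_zero, Nat.le_zero, Nat.add_eq_zero_iff] at this
    simp [ct, this.1, this.2]
  rw [hT.contentsM_shapeOf_eq_cons, Fin.univ_succ, Finset.cons_val, Multiset.map_cons, hct0,
    Finset.map_val, Multiset.map_map, Fin.univ_castSuccEmb, Finset.cons_val, Multiset.map_cons,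
    Finset.map_val, Multiset.map_map, Multiset.cons_swap] at h
  change ct (n + 2) T (Fin.last n).succ ::ₘ _ = _ at h
  rw [Fin.succ_last, Multiset.cons_inj_right] at h
  rw [← h, Multiset.erase_cons_head]
  rfl

end IsSYT

lemma exists_perm_comp_eq_of_map_univ_eq {α β : Type*} [Fintype α] [DecidableEq β] {f g : α → β}
    (h : Finset.univ.val.map f = Finset.univ.val.map g) : ∃ σ : Equiv.Perm α, g ∘ σ = f := by
  have hcard : ∀ b, Fintype.card {a // f a = b} = Fintype.card {a // g a = b} := fun b => by
    have := congrArg (Multiset.count b) h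
    simp only [Multiset.count_map] at this
    simp only [Fintype.card_subtype, Finset.card, Finset.filter_val, eq_comm (b := b)]
    exact this
  exact ⟨Equiv.ofFiberEquiv fun b => Fintype.equivOfCardEq (hcard b),
    funext (Equiv.ofFiberEquiv_map _)⟩

lemma extPerm_castSucc {n : ℕ} (τ : Equiv.Perm (Fin n)) (i : Fin n) :
    extPerm n τ i.castSucc = (τ i).castSucc :=
  Equiv.Perm.viaFintypeEmbedding_apply_image _ _ i

lemma extPerm_last {n : ℕ} (τ : Equiv.Perm (Fin n)) : extPerm n τ (Fin.last n) = Fin.last n :=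
  Equiv.Perm.viaFintypeEmbedding_apply_notMem_range _ _ (by simp)

theorem stmt15_general (n : ℕ) (f : MvPolynomial (Fin (n + 1)) ℂ)
    (hsym : ∀ σ : Equiv.Perm (Fin (n + 1)), σ (Fin.last n) = Fin.last n →
      MvPolynomial.rename σ f = f)
    (mu : Multiset ℕ)
    (j : ℕ) (g : Fin (n + 1) → ℤ)
    (hg1 : g (Fin.last n) = cCorner mu j)
    (hg2 : ((Finset.univ.erase (Fin.last n)).val.map g) = (contentsM (iminus mu j)).erase 0) :
    polyEval f (fun v : Fin (n + 1) => JM (n + 2) v.succ) * Gam (n + 1) mu j =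
      (MvPolynomial.eval fun v : Fin (n + 1) => ((g v : ℤ) : ℂ)) f • Gam (n + 1) mu j := by
  rw [Gam, Finset.mul_sum, Finset.smul_sum]
  refine Finset.sum_congr rfl fun T hTmem => ?_
  obtain ⟨⟨hT, rfl⟩, rfl⟩ := (Finset.mem_filter.1 hTmem).imp_left fun h => (Finset.mem_filter.1 h).2
  rw [polyEval_mul_of_mul_eq_smul f fun v => JM_mul_eTg hT v.succ]
  have hmap : Finset.univ.val.map (g ∘ Fin.castSucc) =
      Finset.univ.val.map fun v : Fin n => ct (n + 2) T v.castSucc.succ := by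
    rw [hT.map_ct_succ_castSucc, ← hg2, Fin.univ_castSuccEmb, Finset.erase_cons, Finset.map_val,
      Multiset.map_map]
    rfl
  obtain ⟨τ, hτ⟩ := exists_perm_comp_eq_of_map_univ_eq hmap
  congr 1
  conv_lhs => rw [← hsym (extPerm n τ) (extPerm_last τ), MvPolynomial.eval_rename]
  congr 2
  funext v
  refine Fin.lastCases ?_ (fun i => ?_) v
  · simp [extPerm_last, hg1, hT.ct_last_eq_cCorner]
  · simpa [extPerm_castSucc] using congrFun hτ i

/-- for an almost symmetric polynomial `f` (symmetric in all variables except the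
last, the variables standing for `x_2, …, x_{n+2}` evaluated at `J_2, …, J_{n+2}`), the
`Z_1`-idempotent `Γ^{μ,j}` is an eigenvector of `f(J_2,…,J_{n+2})` with eigenvalue
`f(c_{j_−(μ)}, c_{μ,j})`, the contents of `j_−(μ)` (other than that of the cell containing `1`)
being assigned to the symmetric variables in any order. -/
theorem stmt15 (n : ℕ) (f : MvPolynomial (Fin (n + 1)) ℂ)
    (hsym : ∀ σ : Equiv.Perm (Fin (n + 1)), σ (Fin.last n) = Fin.last n →
      MvPolynomial.rename σ f = f)
    (mu : Multiset ℕ) (hmu : mu.sum = n + 2) (hmpos : ∀ a ∈ mu, 0 < a)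
    (j : ℕ) (hj : j ∈ mu) (g : Fin (n + 1) → ℤ)
    (hg1 : g (Fin.last n) = cCorner mu j)
    (hg2 : ((Finset.univ.erase (Fin.last n)).val.map g) = (contentsM (iminus mu j)).erase 0) :
    polyEval f (fun v : Fin (n + 1) => JM (n + 2) v.succ) * Gam (n + 1) mu j =
      (MvPolynomial.eval fun v : Fin (n + 1) => ((g v : ℤ) : ℂ)) f • Gam (n + 1) mu j :=
  stmt15_general n f hsym mu j g hg1 hg2

end NC
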